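/- Let X ≥ 2 and let M be an R×C matrix with integer entries in {0,…,X}, and let G_M be its weighted grid embedding. Then for every 1 ≤ k ≤ R and 1 ≤ j ≤ C, the shortest-path distance between a_j and b_k in G_M equals X²·(2R·(C−j+1) + 2jk − 1) + M_{k,j}. -/

import Mathlib

/-!
The upper bound is the walk from `a j` down column `j` to `v k j`, across the shortcut `x k j`,
and then right along row `k` to `b k`; its cost is exactly the claimed value.

For the lower bound, an integer potential `φ` with `|φ q - φ p| ≤ w(p, q)` on every edge satisfies
`φ t - φ s ≤ d(s, t)`. In units of `X²`, `gridPot` estimates the distance from `a j` from below: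
left of column `j` a column step costs at least `2R` and a row step in column `c` costs `2c`, while
right of column `j` every vertex is reached by descending column `j` and then moving right.
The entry `M k j` is carried by the part of row `k` lying beyond the shortcut `x k j`: every other
edge entering that part has slack at least `X² ≥ M k j`.
-/

/-- Vertices of the grid embedding: `a j` (top terminals), `b i` (right terminals),
`u i j` (grid intersections), `v i j` (subdivision vertex above `u i j`),
`w i j` (subdivision vertex to the right of `u i j`), `x i j` (shortcut vertices).
Indices are 1-based natural numbers; out-of-range vertices are isolated. -/
inductive GV : Type
  | a (j : ℕ)
  | b (i : ℕ)
  | u (i j : ℕ)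
  | v (i j : ℕ)
  | w (i j : ℕ)
  | x (i j : ℕ)
deriving DecidableEq

/-- One-directional edge weights of the grid embedding of a boolean `R × C` matrix `M`;
`⊤` means "no edge". -/
def dirW (R C : ℕ) (M : ℕ → ℕ → Bool) : GV → GV → ℕ∞
  | GV.a j, GV.v i' j' =>
      if i' = 1 ∧ j' = j ∧ 1 ≤ j ∧ j ≤ C then ((2 * j - 1 : ℕ) : ℕ∞) else ⊤
  | GV.v i j, GV.u i' j' =>
      if i' = i ∧ j' = j ∧ 1 ≤ i ∧ i ≤ R ∧ 1 ≤ j ∧ j ≤ C then 1 else ⊤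
  | GV.u i j, GV.v i' j' =>
      if i' = i + 1 ∧ j' = j ∧ 1 ≤ i ∧ i + 1 ≤ R ∧ 1 ≤ j ∧ j ≤ C then
        ((2 * j - 1 : ℕ) : ℕ∞) else ⊤
  | GV.u i j, GV.w i' j' =>
      if i' = i ∧ j' = j ∧ 1 ≤ i ∧ i ≤ R ∧ 1 ≤ j ∧ j ≤ C then 2 else ⊤
  | GV.w i j, GV.u i' j' =>
      if i' = i ∧ j' = j + 1 ∧ 1 ≤ i ∧ i ≤ R ∧ 1 ≤ j ∧ j + 1 ≤ C then
        ((2 * R - 2 : ℕ) : ℕ∞) else ⊤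
  | GV.w i j, GV.b i' =>
      if i' = i ∧ j = C ∧ 1 ≤ i ∧ i ≤ R ∧ 1 ≤ C then ((2 * R - 2 : ℕ) : ℕ∞) else ⊤
  | GV.v i j, GV.x i' j' =>
      if i' = i ∧ j' = j ∧ M i j = true ∧ 1 ≤ i ∧ i ≤ R ∧ 1 ≤ j ∧ j ≤ C then 1 else ⊤
  | GV.x i j, GV.w i' j' =>
      if i' = i ∧ j' = j ∧ M i j = true ∧ 1 ≤ i ∧ i ≤ R ∧ 1 ≤ j ∧ j ≤ C then 1 else ⊤
  | _, _ => ⊤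

/-- Symmetrization of a one-directional weight function. -/
noncomputable def symW {V : Type} (f : V → V → ℕ∞) : V → V → ℕ∞ := fun p q => min (f p q) (f q p)

/-- Edge weights of the grid embedding of a boolean matrix `M`. -/
noncomputable def gridW (R C : ℕ) (M : ℕ → ℕ → Bool) : GV → GV → ℕ∞ := symW (dirW R C M)

/-- One-directional edge weights of the weighted grid embedding of an `R × C` matrix `M`
with entries in `{0, …, X}`: the grid embedding of the all-ones boolean matrix with every
weight multiplied by `X²`, and the weight of each edge `(v i j, x i j)` increased by `M i j`. -/
def dirWt (R C X : ℕ) (M : ℕ → ℕ → ℕ) : GV → GV → ℕ∞ := fun p q =>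
  (X : ℕ∞) ^ 2 * dirW R C (fun _ _ => true) p q +
    (match p, q with
      | GV.v i j, GV.x i' j' => if i' = i ∧ j' = j then (M i j : ℕ∞) else 0
      | _, _ => 0)

/-- Edge weights of the weighted grid embedding of `M`. -/
noncomputable def wgridW (R C X : ℕ) (M : ℕ → ℕ → ℕ) : GV → GV → ℕ∞ := symW (dirWt R C X M)

/-- Edge weights of the mirrored grid `G'`: the (weighted, scaled by `X²`) grid embedding
with all shortcut vertices removed.  Mirroring is a weight-preserving graph isomorphism, so
the mirrored copy is represented by the same abstract graph. -/
noncomputable def mirW (R C X : ℕ) : GV → GV → ℕ∞ :=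
  fun p q => (X : ℕ∞) ^ 2 * gridW R C (fun _ _ => false) p q

/-- Total weight of a walk, given as its list of visited vertices. -/
def cost {V : Type} (W : V → V → ℕ∞) : List V → ℕ∞
  | p :: q :: l => W p q + cost W (q :: l)
  | _ => 0

/-- Shortest-path distance: the least total weight of a walk from `s` to `t`
(`⊤` if there is none; walks through a non-edge have cost `⊤`). -/
noncomputable def gdist {V : Type} (W : V → V → ℕ∞) (s t : V) : ℕ∞ :=
  sInf {c | ∃ l : List V, l.head? = some s ∧ l.getLast? = some t ∧ cost W l = c}

section Walks

variable {V : Type} (W : V → V → ℕ∞)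

theorem cost_append_cons (l m : List V) (r : V) :
    cost W (l ++ r :: m) = cost W (l ++ [r]) + cost W (r :: m) := by
  induction l with
  | nil => simp [cost]
  | cons p l ih =>
    cases l with
    | nil => simp [cost]
    | cons q l => simp only [List.cons_append, cost] at ih ⊢; rw [ih, add_assoc]

theorem gdist_le_cost {s t : V} {l : List V} (hs : l.head? = some s) (ht : l.getLast? = some t) :
    gdist W s t ≤ cost W l :=
  sInf_le ⟨l, hs, ht, rfl⟩

theorem gdist_le_weight (p q : V) : gdist W p q ≤ W p q := by
  simpa [cost] using gdist_le_cost W (l := [p, q]) rfl rfl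

theorem gdist_self (p : V) : gdist W p p = 0 :=
  nonpos_iff_eq_zero.mp (by simpa [cost] using gdist_le_cost W (l := [p]) rfl rfl)

theorem exists_cost_eq_gdist {s t : V} (h : gdist W s t ≠ ⊤) :
    ∃ l : List V, l.head? = some s ∧ l.getLast? = some t ∧ cost W l = gdist W s t := by
  have hne : {c | ∃ l : List V, l.head? = some s ∧ l.getLast? = some t ∧ cost W l = c}.Nonempty :=
    Set.nonempty_iff_ne_empty.mpr fun he => h (by rw [gdist, he, sInf_empty])
  exact csInf_mem hne

theorem gdist_triangle (s r t : V) : gdist W s t ≤ gdist W s r + gdist W r t := by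
  rcases eq_or_ne (gdist W s r) ⊤ with h₁ | h₁
  · simp [h₁]
  rcases eq_or_ne (gdist W r t) ⊤ with h₂ | h₂
  · simp [h₂]
  obtain ⟨l₁, hs, hr₁, hc₁⟩ := exists_cost_eq_gdist W h₁
  obtain ⟨l₂, hr₂, ht, hc₂⟩ := exists_cost_eq_gdist W h₂
  obtain ⟨l, rfl⟩ : ∃ l, l₁ = l ++ [r] := ⟨l₁.dropLast, (List.dropLast_append_getLast? _ hr₁).symm⟩
  obtain ⟨m, rfl⟩ : ∃ m, l₂ = r :: m := by cases l₂ <;> simp_all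
  rw [← hc₁, ← hc₂, ← cost_append_cons]
  exact gdist_le_cost W (by cases l <;> simp_all) (by simp_all)

theorem gdist_le_cost_gdist :
    ∀ (l : List V) {s t : V}, l.head? = some s → l.getLast? = some t →
      gdist W s t ≤ cost (gdist W) l
  | [], _, _, hs, _ => by simp at hs
  | [p], _, _, hs, ht => by simp_all [gdist_self]
  | p :: q :: l, s, t, hs, ht => by
    obtain rfl : p = s := by simpa using hs
    calc gdist W p t ≤ gdist W p q + gdist W q t := gdist_triangle W p q t
      _ ≤ gdist W p q + cost (gdist W) (q :: l) := by
        gcongr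
        exact gdist_le_cost_gdist (q :: l) rfl (by simpa using ht)

theorem sub_le_cost_of_potential (φ : V → ℤ) (hφ : ∀ p q (n : ℕ), W p q = n → φ q - φ p ≤ n) :
    ∀ (l : List V) {s t : V} {n : ℕ}, l.head? = some s → l.getLast? = some t →
      cost W l = n → φ t - φ s ≤ n
  | [], _, _, _, hs, _, _ => by simp at hs
  | [p], _, _, _, hs, ht, _ => by simp_all
  | p :: q :: l, s, t, n, hs, ht, hc => by
    obtain rfl : p = s := by simpa using hs
    obtain ⟨a, b, ha, hb, rfl⟩ := WithTop.add_eq_coe.mp hc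
    have hpq := hφ p q a ha.symm
    have hqt := sub_le_cost_of_potential φ hφ (q :: l) rfl (by simpa using ht) hb.symm
    push_cast
    linarith

theorem le_gdist_of_potential (φ : V → ℤ) (hφ : ∀ p q (n : ℕ), W p q = n → φ q - φ p ≤ n)
    {s t : V} {n : ℕ} (h : (n : ℤ) ≤ φ t - φ s) : (n : ℕ∞) ≤ gdist W s t := by
  refine le_sInf ?_
  rintro _ ⟨l, hs, ht, rfl⟩
  induction hc : cost W l using ENat.recTopCoe with
  | top => exact le_top
  | coe c => exact_mod_cast h.trans (sub_le_cost_of_potential W φ hφ l hs ht hc)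

theorem sub_le_of_symW_eq {f : V → V → ℕ∞} (φ : V → ℤ)
    (h : ∀ p q (n : ℕ), f p q = n → |φ q - φ p| ≤ n) :
    ∀ p q (n : ℕ), symW f p q = n → φ q - φ p ≤ n := by
  intro p q n hpq
  rcases min_choice (f p q) (f q p) with hmin | hmin <;> rw [symW, hmin] at hpq
  · exact (abs_sub_le_iff.mp (h p q n hpq)).1
  · exact (abs_sub_le_iff.mp (h q p n hpq)).2

end Walks

section Weights

variable {R C X : ℕ} (M : ℕ → ℕ → ℕ) {i c : ℕ}

theorem dirWt_eq_top (hX : X ≠ 0) {p q : GV} (h : dirW R C (fun _ _ => true) p q = ⊤) :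
    dirWt R C X M p q = ⊤ := by
  simp [dirWt, h, ENat.mul_top, hX]

theorem dirWt_a_v (hc1 : 1 ≤ c) (hcC : c ≤ C) :
    dirWt R C X M (.a c) (.v 1 c) = ((X ^ 2 * (2 * c - 1) : ℕ) : ℕ∞) := by
  simp [dirWt, dirW, hc1, hcC]

theorem dirWt_v_u (hi1 : 1 ≤ i) (hiR : i ≤ R) (hc1 : 1 ≤ c) (hcC : c ≤ C) :
    dirWt R C X M (.v i c) (.u i c) = ((X ^ 2 : ℕ) : ℕ∞) := by
  simp [dirWt, dirW, hi1, hiR, hc1, hcC]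

theorem dirWt_u_v (hi1 : 1 ≤ i) (hiR : i + 1 ≤ R) (hc1 : 1 ≤ c) (hcC : c ≤ C) :
    dirWt R C X M (.u i c) (.v (i + 1) c) = ((X ^ 2 * (2 * c - 1) : ℕ) : ℕ∞) := by
  simp [dirWt, dirW, hi1, hiR, hc1, hcC]

theorem dirWt_u_w (hi1 : 1 ≤ i) (hiR : i ≤ R) (hc1 : 1 ≤ c) (hcC : c ≤ C) :
    dirWt R C X M (.u i c) (.w i c) = ((X ^ 2 * 2 : ℕ) : ℕ∞) := by
  simp [dirWt, dirW, hi1, hiR, hc1, hcC]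

theorem dirWt_w_u (hi1 : 1 ≤ i) (hiR : i ≤ R) (hc1 : 1 ≤ c) (hcC : c + 1 ≤ C) :
    dirWt R C X M (.w i c) (.u i (c + 1)) = ((X ^ 2 * (2 * R - 2) : ℕ) : ℕ∞) := by
  simp [dirWt, dirW, hi1, hiR, hc1, hcC]

theorem dirWt_w_b (hi1 : 1 ≤ i) (hiR : i ≤ R) (hC : 1 ≤ C) :
    dirWt R C X M (.w i C) (.b i) = ((X ^ 2 * (2 * R - 2) : ℕ) : ℕ∞) := by
  simp [dirWt, dirW, hi1, hiR, hC]

theorem dirWt_v_x (hi1 : 1 ≤ i) (hiR : i ≤ R) (hc1 : 1 ≤ c) (hcC : c ≤ C) :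
    dirWt R C X M (.v i c) (.x i c) = ((X ^ 2 + M i c : ℕ) : ℕ∞) := by
  simp [dirWt, dirW, hi1, hiR, hc1, hcC]

theorem dirWt_x_w (hi1 : 1 ≤ i) (hiR : i ≤ R) (hc1 : 1 ≤ c) (hcC : c ≤ C) :
    dirWt R C X M (.x i c) (.w i c) = ((X ^ 2 : ℕ) : ℕ∞) := by
  simp [dirWt, dirW, hi1, hiR, hc1, hcC]

end Weights

section UpperBound

variable {R C X : ℕ} {M : ℕ → ℕ → ℕ}

theorem gdist_wgridW_le_dirWt (p q : GV) :
    gdist (wgridW R C X M) p q ≤ dirWt R C X M p q :=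
  (gdist_le_weight _ p q).trans (min_le_left _ _)

theorem gdist_a_v_le {j : ℕ} (hj1 : 1 ≤ j) (hjC : j ≤ C) {i : ℕ} (hi1 : 1 ≤ i) (hiR : i ≤ R) :
    gdist (wgridW R C X M) (.a j) (.v i j) ≤ ((X ^ 2 * (2 * j * i - 1) : ℕ) : ℕ∞) := by
  induction i, hi1 using Nat.le_induction with
  | base =>
    simpa only [Nat.mul_one] using (gdist_wgridW_le_dirWt _ _).trans_eq (dirWt_a_v M hj1 hjC)
  | succ i hi1 ih =>
    calc gdist (wgridW R C X M) (.a j) (.v (i + 1) j)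
        ≤ cost (gdist (wgridW R C X M)) [.a j, .v i j, .u i j, .v (i + 1) j] :=
          gdist_le_cost_gdist _ _ rfl rfl
      _ ≤ ((X ^ 2 * (2 * j * i - 1) : ℕ) : ℕ∞)
          + (((X ^ 2 : ℕ) : ℕ∞) + ((X ^ 2 * (2 * j - 1) : ℕ) : ℕ∞)) := by
        simp only [cost, add_zero]
        gcongr
        · exact ih (by omega)
        · exact (gdist_wgridW_le_dirWt _ _).trans_eq (dirWt_v_u M hi1 (by omega) hj1 hjC)
        · exact (gdist_wgridW_le_dirWt _ _).trans_eq (dirWt_u_v M hi1 hiR hj1 hjC)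
      _ = ((X ^ 2 * (2 * j * (i + 1) - 1) : ℕ) : ℕ∞) := by
        norm_cast
        zify [show 1 ≤ 2 * j * i by nlinarith, show 1 ≤ 2 * j by omega,
          show 1 ≤ 2 * j * (i + 1) by nlinarith]
        ring

theorem gdist_w_w_le {k : ℕ} (hk1 : 1 ≤ k) (hkR : k ≤ R) {j : ℕ} (hj1 : 1 ≤ j) {c : ℕ}
    (hjc : j ≤ c) (hcC : c ≤ C) :
    gdist (wgridW R C X M) (.w k j) (.w k c) ≤ ((X ^ 2 * (2 * R * (c - j)) : ℕ) : ℕ∞) := by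
  induction c, hjc using Nat.le_induction with
  | base => simp [gdist_self]
  | succ c hjc ih =>
    calc gdist (wgridW R C X M) (.w k j) (.w k (c + 1))
        ≤ cost (gdist (wgridW R C X M)) [.w k j, .w k c, .u k (c + 1), .w k (c + 1)] :=
          gdist_le_cost_gdist _ _ rfl rfl
      _ ≤ ((X ^ 2 * (2 * R * (c - j)) : ℕ) : ℕ∞)
          + (((X ^ 2 * (2 * R - 2) : ℕ) : ℕ∞) + ((X ^ 2 * 2 : ℕ) : ℕ∞)) := by
        simp only [cost, add_zero]
        gcongr
        · exact ih (by omega)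
        · exact (gdist_wgridW_le_dirWt _ _).trans_eq (dirWt_w_u M hk1 hkR (by omega) hcC)
        · exact (gdist_wgridW_le_dirWt _ _).trans_eq (dirWt_u_w M hk1 hkR (by omega) hcC)
      _ = ((X ^ 2 * (2 * R * (c + 1 - j)) : ℕ) : ℕ∞) := by
        norm_cast
        zify [hjc, show j ≤ c + 1 by omega, show 2 ≤ 2 * R by omega]
        ring

theorem gdist_a_b_le {k j : ℕ} (hk1 : 1 ≤ k) (hkR : k ≤ R) (hj1 : 1 ≤ j) (hjC : j ≤ C) :
    gdist (wgridW R C X M) (.a j) (.b k) ≤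
      ((X ^ 2 * (2 * R * (C - j + 1) + 2 * j * k - 1) + M k j : ℕ) : ℕ∞) := by
  calc gdist (wgridW R C X M) (.a j) (.b k)
      ≤ cost (gdist (wgridW R C X M)) [.a j, .v k j, .x k j, .w k j, .w k C, .b k] :=
        gdist_le_cost_gdist _ _ rfl rfl
    _ ≤ ((X ^ 2 * (2 * j * k - 1) : ℕ) : ℕ∞) + (((X ^ 2 + M k j : ℕ) : ℕ∞)
          + (((X ^ 2 : ℕ) : ℕ∞) + (((X ^ 2 * (2 * R * (C - j)) : ℕ) : ℕ∞)
          + ((X ^ 2 * (2 * R - 2) : ℕ) : ℕ∞)))) := by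
      simp only [cost, add_zero]
      gcongr
      · exact gdist_a_v_le hj1 hjC hk1 hkR
      · exact (gdist_wgridW_le_dirWt _ _).trans_eq (dirWt_v_x M hk1 hkR hj1 hjC)
      · exact (gdist_wgridW_le_dirWt _ _).trans_eq (dirWt_x_w M hk1 hkR hj1 hjC)
      · exact gdist_w_w_le hk1 hkR hj1 hjC le_rfl
      · exact (gdist_wgridW_le_dirWt _ _).trans_eq (dirWt_w_b M hk1 hkR (by omega))
    _ = ((X ^ 2 * (2 * R * (C - j + 1) + 2 * j * k - 1) + M k j : ℕ) : ℕ∞) := by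
      norm_cast
      zify [hjC, show 1 ≤ 2 * j * k by nlinarith, show 2 ≤ 2 * R by omega,
        show 1 ≤ 2 * R * (C - j + 1) + 2 * j * k by nlinarith]
      ring

end UpperBound

section Potential

variable (R C j k : ℕ) (s m : ℤ)

def leftPot (i c : ℕ) : ℤ := 2 * j + 2 * R * ((j : ℤ) - c) + 2 * c * ((i : ℤ) - 1)

def rightPot (i c : ℕ) : ℤ := 2 * j * i + 2 * R * ((c : ℤ) - j)

def rowBonus (i : ℕ) : ℤ := if i = k then m else 0

def potU (i c : ℕ) : ℤ :=
  if c ≤ j then s * leftPot R j i c else s * (rightPot R j i c - 1) + rowBonus k m i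

def potV (i c : ℕ) : ℤ :=
  if c ≤ j then s * (leftPot R j i c - 1) else s * rightPot R j i c

def potW (i c : ℕ) : ℤ :=
  if c < j then s * (leftPot R j i c - 2) else s * (rightPot R j i c + 1) + rowBonus k m i

def potX (i c : ℕ) : ℤ :=
  if c < j then s * (leftPot R j i c - 2)
  else if c = j then s * rightPot R j i c + rowBonus k m i
  else s * (rightPot R j i c + 1)

-- `a c` is a leaf, so any value within its edge weight of `v 1 c` will do;
-- this one vanishes at `c = j`.
def gridPot : GV → ℤ
  | .a c => potV R j s 1 c - s * (2 * c - 1)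
  | .b i => potW R j k s m i C + s * (2 * R - 2)
  | .u i c => potU R j k s m i c
  | .v i c => potV R j s i c
  | .w i c => potW R j k s m i c
  | .x i c => potX R j k s m i c

variable {R C j k s m}

theorem rowBonus_nonneg (hm : 0 ≤ m) (i : ℕ) : 0 ≤ rowBonus k m i := by
  unfold rowBonus; split_ifs <;> omega

theorem rowBonus_le (hm : 0 ≤ m) (i : ℕ) : rowBonus k m i ≤ m := by
  unfold rowBonus; split_ifs <;> omega

theorem abs_gridPot_v_sub_a (hs : 0 ≤ s) (c : ℕ) (hc : 1 ≤ c) :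
    |gridPot R C j k s m (.v 1 c) - gridPot R C j k s m (.a c)| ≤ s * (2 * c - 1) := by
  simp only [gridPot]
  rw [sub_sub_cancel, abs_of_nonneg]
  have : (1 : ℤ) ≤ c := by exact_mod_cast hc
  nlinarith

theorem abs_gridPot_u_sub_v (hm0 : 0 ≤ m) (hms : m ≤ s) (i c : ℕ) :
    |gridPot R C j k s m (.u i c) - gridPot R C j k s m (.v i c)| ≤ s := by
  have h0 := rowBonus_nonneg (k := k) hm0 i
  have h1 := rowBonus_le (k := k) hm0 i
  simp only [gridPot, potU, potV]
  rw [abs_sub_le_iff]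
  split_ifs <;> constructor <;> nlinarith

theorem abs_gridPot_v_sub_u (hm0 : 0 ≤ m) (hms : m ≤ s) (i c : ℕ) (hc : 1 ≤ c) :
    |gridPot R C j k s m (.v (i + 1) c) - gridPot R C j k s m (.u i c)| ≤ s * (2 * c - 1) := by
  have h0 := rowBonus_nonneg (k := k) hm0 i
  have h1 := rowBonus_le (k := k) hm0 i
  simp only [gridPot, potU, potV, leftPot, rightPot]
  rw [abs_sub_le_iff]
  push_cast
  split_ifs <;> constructor <;> nlinarith

theorem abs_gridPot_w_sub_u (hm0 : 0 ≤ m) (hms : m ≤ s) (i c : ℕ) :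
    |gridPot R C j k s m (.w i c) - gridPot R C j k s m (.u i c)| ≤ s * 2 := by
  have h0 := rowBonus_nonneg (k := k) hm0 i
  have h1 := rowBonus_le (k := k) hm0 i
  simp only [gridPot, potU, potW, leftPot, rightPot]
  rw [abs_sub_le_iff]
  rcases lt_trichotomy c j with h | rfl | h
  · simp only [if_pos h, if_pos h.le]; constructor <;> nlinarith
  · simp only [lt_irrefl, le_refl, if_true, if_false]; constructor <;> nlinarith
  · simp only [if_neg h.not_gt, if_neg h.not_ge]; constructor <;> nlinarith

theorem abs_gridPot_u_sub_w (hs : 0 ≤ s) (i c : ℕ) (hi1 : 1 ≤ i) (hiR : i ≤ R) :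
    |gridPot R C j k s m (.u i (c + 1)) - gridPot R C j k s m (.w i c)| ≤ s * (2 * R - 2) := by
  simp only [gridPot, potU, potW, leftPot, rightPot]
  rw [abs_sub_le_iff]
  have : (1 : ℤ) ≤ i := by exact_mod_cast hi1
  have : (i : ℤ) ≤ R := by exact_mod_cast hiR
  rcases lt_or_ge c j with h | h
  · simp only [if_pos h, if_pos (Nat.succ_le_of_lt h)]
    push_cast
    constructor <;> nlinarith
  · simp only [if_neg h.not_gt, if_neg (show ¬ c + 1 ≤ j by omega)]
    push_cast
    constructor <;> nlinarith

theorem abs_gridPot_b_sub_w (hs : 0 ≤ s) (hR : 1 ≤ R) (i : ℕ) :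
    |gridPot R C j k s m (.b i) - gridPot R C j k s m (.w i C)| ≤ s * (2 * R - 2) := by
  simp only [gridPot, add_sub_cancel_left]
  have : (1 : ℤ) ≤ R := by exact_mod_cast hR
  rw [abs_of_nonneg (by nlinarith)]

theorem abs_gridPot_x_sub_v (M : ℕ → ℕ → ℕ) (hs : 0 ≤ s) (i c : ℕ) :
    |gridPot R C j k s (M k j) (.x i c) - gridPot R C j k s (M k j) (.v i c)| ≤ s + M i c := by
  have h0 := rowBonus_nonneg (k := k) (Nat.cast_nonneg (M k j)) i
  simp only [gridPot, potV, potX, leftPot, rightPot]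
  rw [abs_sub_le_iff]
  rcases lt_trichotomy c j with h | rfl | h
  · simp only [if_pos h, if_pos h.le]; constructor <;> nlinarith
  · have hbonus : rowBonus k (M k c) i ≤ M i c := by
      unfold rowBonus
      split_ifs with hik
      · rw [hik]
      · positivity
    simp only [lt_irrefl, le_refl, if_true, if_false]; constructor <;> nlinarith
  · simp only [if_neg h.not_gt, if_neg h.not_ge, if_neg h.ne']; constructor <;> nlinarith

theorem abs_gridPot_w_sub_x (hm0 : 0 ≤ m) (hms : m ≤ s) (i c : ℕ) :
    |gridPot R C j k s m (.w i c) - gridPot R C j k s m (.x i c)| ≤ s := by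
  have h0 := rowBonus_nonneg (k := k) hm0 i
  have h1 := rowBonus_le (k := k) hm0 i
  simp only [gridPot, potW, potX, leftPot, rightPot]
  rw [abs_sub_le_iff]
  rcases lt_trichotomy c j with h | rfl | h
  · simp only [if_pos h]; constructor <;> nlinarith
  · simp only [lt_irrefl, if_true, if_false]; constructor <;> nlinarith
  · simp only [if_neg h.not_gt, if_neg h.ne']; constructor <;> nlinarith

theorem gridPot_a_eq_zero : gridPot R C j k s m (.a j) = 0 := by
  simp [gridPot, potV, leftPot]

theorem gridPot_b_eq (hjC : j ≤ C) :
    gridPot R C j k s m (.b k) = s * (2 * R * (C - j + 1) + 2 * j * k - 1) + m := by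
  simp only [gridPot, potW, if_neg hjC.not_gt, rightPot, rowBonus, if_true]
  ring

end Potential

theorem abs_gridPot_sub_le {R C X j k : ℕ} {M : ℕ → ℕ → ℕ} (hX : X ≠ 0) (hm : M k j ≤ X ^ 2)
    (p q : GV) (n : ℕ) (h : dirWt R C X M p q = n) :
    |gridPot R C j k (X ^ 2) (M k j) q - gridPot R C j k (X ^ 2) (M k j) p| ≤ n := by
  have hd : dirW R C (fun _ _ => true) p q ≠ ⊤ := fun h' => by simp [dirWt_eq_top M hX h'] at h
  have hs : (0 : ℤ) ≤ X ^ 2 := by positivity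
  have hm0 : (0 : ℤ) ≤ M k j := by positivity
  have hms : (M k j : ℤ) ≤ X ^ 2 := by exact_mod_cast hm
  cases p <;> cases q <;>
    simp only [dirW, ne_eq, ite_eq_right_iff, Classical.not_imp, not_true_eq_false] at hd
  -- The binders are named so that the variables kept by the `rfl` patterns are the named ones.
  case a.v _ _ c =>
    obtain ⟨⟨rfl, rfl, hc1, hcC⟩, -⟩ := hd
    obtain rfl := Nat.cast_injective (h.symm.trans (dirWt_a_v M hc1 hcC))
    simpa [Nat.cast_sub (by omega : 1 ≤ 2 * c)] using abs_gridPot_v_sub_a hs c hc1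
  case v.u _ _ i c =>
    obtain ⟨⟨rfl, rfl, hi1, hiR, hc1, hcC⟩, -⟩ := hd
    obtain rfl := Nat.cast_injective (h.symm.trans (dirWt_v_u M hi1 hiR hc1 hcC))
    simpa using abs_gridPot_u_sub_v hm0 hms i c
  case u.v i _ _ c =>
    obtain ⟨⟨rfl, rfl, hi1, hiR, hc1, hcC⟩, -⟩ := hd
    obtain rfl := Nat.cast_injective (h.symm.trans (dirWt_u_v M hi1 hiR hc1 hcC))
    simpa [Nat.cast_sub (by omega : 1 ≤ 2 * c)] using abs_gridPot_v_sub_u hm0 hms i c hc1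
  case u.w _ _ i c =>
    obtain ⟨⟨rfl, rfl, hi1, hiR, hc1, hcC⟩, -⟩ := hd
    obtain rfl := Nat.cast_injective (h.symm.trans (dirWt_u_w M hi1 hiR hc1 hcC))
    simpa using abs_gridPot_w_sub_u hm0 hms i c
  case w.u _ c i _ =>
    obtain ⟨⟨rfl, rfl, hi1, hiR, hc1, hcC⟩, -⟩ := hd
    obtain rfl := Nat.cast_injective (h.symm.trans (dirWt_w_u M hi1 hiR hc1 hcC))
    simpa [Nat.cast_sub (by omega : 2 ≤ 2 * R)] using abs_gridPot_u_sub_w hs i c hi1 hiR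
  case w.b _ _ i =>
    obtain ⟨⟨rfl, rfl, hi1, hiR, hC⟩, -⟩ := hd
    obtain rfl := Nat.cast_injective (h.symm.trans (dirWt_w_b M hi1 hiR hC))
    simpa [Nat.cast_sub (by omega : 2 ≤ 2 * R)] using abs_gridPot_b_sub_w hs (hi1.trans hiR) i
  case v.x _ _ i c =>
    obtain ⟨⟨rfl, rfl, -, hi1, hiR, hc1, hcC⟩, -⟩ := hd
    obtain rfl := Nat.cast_injective (h.symm.trans (dirWt_v_x M hi1 hiR hc1 hcC))
    simpa using abs_gridPot_x_sub_v M hs i c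
  case x.w _ _ i c =>
    obtain ⟨⟨rfl, rfl, -, hi1, hiR, hc1, hcC⟩, -⟩ := hd
    obtain rfl := Nat.cast_injective (h.symm.trans (dirWt_x_w M hi1 hiR hc1 hcC))
    simpa using abs_gridPot_w_sub_x hm0 hms i c

/-- Corollary 2.2.  In the weighted grid embedding `G_M` of an `R × C`
matrix `M` with integer entries in `{0, …, X}` (`X ≥ 2`), for all `1 ≤ k ≤ R` and
`1 ≤ j ≤ C`, the distance between `a j` and `b k` is
`X²·(2R·(C−j+1) + 2jk − 1) + M k j`. -/
theorem wgrid_dist_a_b (R C X : ℕ) (hX : 2 ≤ X) (M : ℕ → ℕ → ℕ)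
    (hM : ∀ i j, 1 ≤ i → i ≤ R → 1 ≤ j → j ≤ C → M i j ≤ X)
    (k j : ℕ) (hk1 : 1 ≤ k) (hkR : k ≤ R) (hj1 : 1 ≤ j) (hjC : j ≤ C) :
    gdist (wgridW R C X M) (GV.a j) (GV.b k) =
      ((X ^ 2 * (2 * R * (C - j + 1) + 2 * j * k - 1) + M k j : ℕ) : ℕ∞) := by
  have hX0 : X ≠ 0 := by omega
  have hm : M k j ≤ X ^ 2 := (hM k j hk1 hkR hj1 hjC).trans (Nat.le_self_pow two_ne_zero X)
  have hpot := sub_le_of_symW_eq (gridPot R C j k (X ^ 2) (M k j)) (abs_gridPot_sub_le hX0 hm)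
  refine le_antisymm (gdist_a_b_le hk1 hkR hj1 hjC) (le_gdist_of_potential _ _ hpot ?_)
  rw [gridPot_a_eq_zero, gridPot_b_eq hjC, sub_zero]
  exact le_of_eq (by push_cast [hjC, show 1 ≤ 2 * R * (C - j + 1) + 2 * j * k by nlinarith]; ring)
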